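/- arXiv:2507.13611 — 6 statements merged into one kernel-verified Lean document; each statement's English description precedes it below -/
import Mathlib

section
/- Let D* ⊆ Υ be any subset with |D*| = k such that c_j ≤ c_i for all j ∈ D* and i ∈ Υ \ D* (i.e., D* consists of k indices of Υ with the smallest values of c). Define a* ∈ {0,1}^n by a*_j = 0 for j ∈ D* and a*_j = ā_j otherwise. Then a* ∈ 𝒜, a* maximizes ⟨c, a⟩ over a ∈ 𝒜, and the maximum value equals Σ_{j ∈ supp(ā)} c_j − Σ_{j ∈ D*} c_j. -/
/-!
Identify a 0/1 vector with its support: `a ≤ ā` means `supp a ⊆ supp ā`, the budget constraint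
means that at most `B` indices of `supp ā` are removed, and `⟨c, a⟩` is the sum of `c` over
`supp a`. Maximising `⟨c, a⟩` thus amounts to minimising the sum of `c` over a removed set `E`
with `#E ≤ B`. Dropping the indices of `E` with `c > 0` only helps, and the rest of `E` is a subset
of `Υ` of size at most `k`; an exchange argument shows that the `k` smallest values of `c` on `Υ`,
all nonpositive, sum to at most as much.
-/

open Finset

section Greedy

variable {ι M : Type*} [AddCommMonoid M] [LinearOrder M] [IsOrderedAddMonoid M]

/-- Both sides are compared with `#s • u` and `#t • u`, where `u = max_s f ≤ 0`. -/
theorem Finset.sum_le_sum_of_card_le_of_forall_le {s t : Finset ι} {f : ι → M}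
    (hcard : #t ≤ #s) (hs : ∀ j ∈ s, f j ≤ 0) (hle : ∀ j ∈ s, ∀ i ∈ t, f j ≤ f i) :
    ∑ j ∈ s, f j ≤ ∑ i ∈ t, f i := by
  rcases t.eq_empty_or_nonempty with rfl | ht
  · simpa using sum_nonpos hs
  have hs' : s.Nonempty := card_pos.1 (ht.card_pos.trans_le hcard)
  set u := s.sup' hs' f
  calc ∑ j ∈ s, f j ≤ #s • u := sum_le_card_nsmul s f u fun j hj => le_sup' f hj
    _ ≤ #t • u := nsmul_le_nsmul_left_of_nonpos ((sup'_le_iff hs' f).2 hs) hcard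
    _ ≤ ∑ i ∈ t, f i :=
      card_nsmul_le_sum t f u fun i hi => (sup'_le_iff hs' f).2 fun j hj => hle j hj i hi

theorem Finset.sum_le_sum_of_card_le_of_forall_le_sdiff [DecidableEq ι] {Υ D E : Finset ι}
    {c : ι → M} (hD : D ⊆ Υ) (hmin : ∀ j ∈ D, ∀ i ∈ Υ \ D, c j ≤ c i) (hΥ : ∀ j ∈ Υ, c j ≤ 0)
    (hE : E ⊆ Υ) (hcard : #E ≤ #D) :
    ∑ j ∈ D, c j ≤ ∑ j ∈ E, c j := by
  have hexchange : ∑ j ∈ D \ E, c j ≤ ∑ j ∈ E \ D, c j :=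
    sum_le_sum_of_card_le_of_forall_le (card_sdiff_le_card_sdiff_iff.2 hcard)
      (fun j hj => hΥ j (hD (mem_sdiff.1 hj).1))
      (fun j hj i hi => hmin j (mem_sdiff.1 hj).1 i (sdiff_subset_sdiff hE le_rfl hi))
  rw [← sum_inter_add_sum_sdiff D E, ← sum_inter_add_sum_sdiff E D, inter_comm]
  gcongr

theorem Finset.sum_le_sum_of_card_le_budget [DecidableEq ι] {supp D E : Finset ι} {c : ι → M}
    {B : ℕ}
    (hD : D ⊆ supp.filter (c · ≤ 0))
    (hmin : ∀ j ∈ D, ∀ i ∈ supp.filter (c · ≤ 0) \ D, c j ≤ c i)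
    (hDcard : #D = min #(supp.filter (c · ≤ 0)) B) (hE : E ⊆ supp) (hEcard : #E ≤ B) :
    ∑ j ∈ D, c j ≤ ∑ j ∈ E, c j := by
  rw [← sum_filter_add_sum_filter_not E (c · ≤ 0)]
  refine le_add_of_le_of_nonneg ?_ (sum_nonneg fun j hj => le_of_not_ge (mem_filter.1 hj).2)
  refine sum_le_sum_of_card_le_of_forall_le_sdiff hD hmin (fun j hj => (mem_filter.1 hj).2)
    (filter_subset_filter _ hE) ?_
  rw [hDcard]
  exact le_min (card_le_card (filter_subset_filter _ hE)) ((card_filter_le _ _).trans hEcard)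

end Greedy

theorem Finset.sum_le_sum_sdiff_of_card_sdiff_le {ι M : Type*} [DecidableEq ι] [AddCommMonoid M]
    [LinearOrder M] [IsOrderedCancelAddMonoid M] {supp D S : Finset ι} {c : ι → M} {B : ℕ}
    (hD : D ⊆ supp.filter (c · ≤ 0))
    (hmin : ∀ j ∈ D, ∀ i ∈ supp.filter (c · ≤ 0) \ D, c j ≤ c i)
    (hDcard : #D = min #(supp.filter (c · ≤ 0)) B) (hS : S ⊆ supp) (hScard : #(supp \ S) ≤ B) :
    ∑ j ∈ S, c j ≤ ∑ j ∈ supp \ D, c j := by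
  have hremoved := sum_le_sum_of_card_le_budget hD hmin hDcard sdiff_subset hScard
  refine le_of_add_le_add_right (a := ∑ j ∈ supp \ S, c j) ?_
  calc ∑ j ∈ S, c j + ∑ j ∈ supp \ S, c j = ∑ j ∈ supp \ D, c j + ∑ j ∈ D, c j := by
        rw [add_comm, sum_sdiff hS, sum_sdiff (hD.trans (filter_subset _ _))]
    _ ≤ ∑ j ∈ supp \ D, c j + ∑ j ∈ supp \ S, c j := by gcongr

section Binary

variable {ι R : Type*}

def IsBinary [Zero R] [One R] (a : ι → R) : Prop := ∀ j, a j = 0 ∨ a j = 1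

namespace IsBinary

theorem sum_mul_eq_sum_filter [Fintype ι] [NonAssocSemiring R] [DecidableEq R] {a : ι → R}
    (ha : IsBinary a) (f : ι → R) :
    ∑ j, f j * a j = ∑ j ∈ univ.filter (a · = 1), f j := by
  rw [sum_filter]
  refine sum_congr rfl fun j _ => ?_
  split_ifs with h
  · rw [h, mul_one]
  · rw [(ha j).resolve_right h, mul_zero]

theorem sum_eq_card_filter [Fintype ι] [NonAssocSemiring R] [DecidableEq R] {a : ι → R}
    (ha : IsBinary a) :
    ∑ j, a j = #(univ.filter (a · = 1)) := by
  simpa using ha.sum_mul_eq_sum_filter 1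

theorem filter_subset_of_le [Fintype ι] [Zero R] [One R] [PartialOrder R] [ZeroLEOneClass R]
    [NeZero (1 : R)] [DecidableEq R] {a b : ι → R} (hb : IsBinary b) (hab : ∀ j, a j ≤ b j) :
    univ.filter (a · = 1) ⊆ univ.filter (b · = 1) := by
  intro j hj
  simp only [mem_filter, mem_univ, true_and] at hj ⊢
  refine (hb j).resolve_left fun h => ?_
  have := hab j
  rw [hj, h] at this
  exact zero_lt_one.not_ge this

variable [DecidableEq ι] (D : Finset ι)

theorem ite_mem [Zero R] [One R] {b : ι → R} (hb : IsBinary b) :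
    IsBinary fun j => if j ∈ D then 0 else b j := by
  intro j
  dsimp only
  split_ifs
  exacts [Or.inl rfl, hb j]

theorem ite_mem_le [Zero R] [One R] [Preorder R] [ZeroLEOneClass R] {b : ι → R}
    (hb : IsBinary b) (j : ι) : (if j ∈ D then 0 else b j) ≤ b j := by
  split_ifs
  exacts [(hb j).elim (·.ge) (fun h => h ▸ zero_le_one), le_rfl]

theorem filter_ite_mem_eq_one [Fintype ι] [Zero R] [One R] [NeZero (1 : R)] [DecidableEq R]
    (b : ι → R) :
    univ.filter (fun j => (if j ∈ D then 0 else b j) = 1) = univ.filter (b · = 1) \ D := by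
  ext j
  by_cases hj : j ∈ D <;> simp [hj]

end IsBinary

end Binary

/-- Greedy-sorting optimality underlying Proposition 2 of the paper: starting from the
binary vector `ā` feasible for `𝒜 = {a ∈ {0,1}^n : a ≤ ā, Σ_j a_j ≥ n − K}`, zeroing out a
set `D*` of `k = min(|Υ|, B)` coordinates of `Υ = {j : ā_j = 1, c_j ≤ 0}` with the smallest
values of `c` yields a maximizer `a*` of `⟨c, a⟩` over `𝒜`, whose value is
`Σ_{j ∈ supp(ā)} c_j − Σ_{j ∈ D*} c_j`. -/
theorem stmt_5 (n K : ℕ) (c : Fin n → ℝ) (abar : Fin n → ℝ)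
    (habar_bin : ∀ j, abar j = 0 ∨ abar j = 1)
    (habar_card : (n : ℝ) - K ≤ ∑ j, abar j)
    (supp : Finset (Fin n)) (hsupp : supp = Finset.univ.filter (fun j => abar j = 1))
    (Υ : Finset (Fin n)) (hΥ : Υ = supp.filter (fun j => c j ≤ 0))
    (B : ℕ) (hB : B = supp.card + K - n)
    (k : ℕ) (hk : k = min Υ.card B)
    (Dstar : Finset (Fin n)) (hD_sub : Dstar ⊆ Υ) (hD_card : Dstar.card = k)
    (hD_min : ∀ j ∈ Dstar, ∀ i ∈ Υ \ Dstar, c j ≤ c i)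
    (astar : Fin n → ℝ) (hastar : astar = fun j => if j ∈ Dstar then 0 else abar j) :
    ((∀ j, astar j = 0 ∨ astar j = 1) ∧ (∀ j, astar j ≤ abar j) ∧
        (n : ℝ) - K ≤ ∑ j, astar j) ∧
    (∀ a : Fin n → ℝ,
        (∀ j, a j = 0 ∨ a j = 1) → (∀ j, a j ≤ abar j) → (n : ℝ) - K ≤ (∑ j, a j) →
        (∑ j, c j * a j) ≤ ∑ j, c j * astar j) ∧
    (∑ j, c j * astar j) = (∑ j ∈ supp, c j) - ∑ j ∈ Dstar, c j := by
  subst hΥ hk hastar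
  have hDsupp : Dstar ⊆ supp := hD_sub.trans (filter_subset _ _)
  have hastar_bin := IsBinary.ite_mem Dstar habar_bin
  have hastar_supp := hsupp ▸ IsBinary.filter_ite_mem_eq_one Dstar abar
  have hval : ∑ j, c j * (if j ∈ Dstar then 0 else abar j) = ∑ j ∈ supp \ Dstar, c j := by
    rw [hastar_bin.sum_mul_eq_sum_filter, hastar_supp]
  rw [IsBinary.sum_eq_card_filter habar_bin, ← hsupp] at habar_card
  have hnK : n ≤ #supp + K := by exact_mod_cast sub_le_iff_le_add.1 habar_card
  refine ⟨⟨hastar_bin, IsBinary.ite_mem_le Dstar habar_bin, ?_⟩,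
    fun a ha_bin ha_le ha_card => ?_, ?_⟩
  · rw [hastar_bin.sum_eq_card_filter, hastar_supp, card_sdiff_of_subset hDsupp,
      sub_le_iff_le_add]
    exact_mod_cast (show n ≤ #supp - #Dstar + K by omega)
  · have hS := hsupp ▸ IsBinary.filter_subset_of_le habar_bin ha_le
    rw [IsBinary.sum_eq_card_filter ha_bin, sub_le_iff_le_add] at ha_card
    have hScard : n ≤ #(univ.filter (a · = 1)) + K := by exact_mod_cast ha_card
    rw [IsBinary.sum_mul_eq_sum_filter ha_bin, hval]
    refine sum_le_sum_sdiff_of_card_sdiff_le hD_sub hD_min hD_card hS ?_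
    rw [card_sdiff_of_subset hS]
    omega
  · rw [hval, sum_sdiff_eq_sub hDsupp]
end

section
/- For every x̂ ∈ V, the supremum over π ∈ ℝ^n of ⟨π, x̂⟩ + 𝓛(π) equals g(x̂), and this supremum is attained by some π ∈ ℝ^n. -/
/-- The `0/1`-valued real vector associated with a binary vector `r ∈ {0,1}^n`. -/
def binVec {n : ℕ} (r : Fin n → Bool) : Fin n → ℝ := fun j => if r j then 1 else 0

/-- The Lagrangian dual function `𝓛(π) = min_{r ∈ {0,1}^n} (g(r) − ⟨π, r⟩)`. -/
noncomputable def lagDual (n : ℕ) (g : (Fin n → Bool) → ℝ) (π : Fin n → ℝ) : ℝ :=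
  ⨅ r : Fin n → Bool, (g r - ∑ j, π j * binVec r j)

/-- Zero duality gap at binary points (Proposition 4 of the paper): for every binary `x̂`,
`sup_{π ∈ ℝ^n} (⟨π, x̂⟩ + 𝓛(π)) = g(x̂)`, and the supremum is attained by some `π`. -/
theorem stmt_7 (n : ℕ) (hn : 0 < n) (g : (Fin n → Bool) → ℝ) (xhat : Fin n → Bool) :
    (⨆ π : Fin n → ℝ, ((∑ j, π j * binVec xhat j) + lagDual n g π)) = g xhat ∧
    ∃ π : Fin n → ℝ, (∑ j, π j * binVec xhat j) + lagDual n g π = g xhat := by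
  classical
  set M : ℝ := ⨆ r : Fin n → Bool, (g xhat - g r) with hM
  have hMge : ∀ r, g xhat - g r ≤ M := fun r =>
    le_ciSup (f := fun r => g xhat - g r) (Set.finite_range _).bddAbove r
  have hM0 : 0 ≤ M := by have := hMge xhat; linarith
  set π0 : Fin n → ℝ := fun j => M * (2 * binVec xhat j - 1) with hπ0
  -- upper bound for any π
  have hub : ∀ π : Fin n → ℝ, (∑ j, π j * binVec xhat j) + lagDual n g π ≤ g xhat := by
    intro π
    have h1 : lagDual n g π ≤ g xhat - ∑ j, π j * binVec xhat j :=
      ciInf_le (Set.finite_range _).bddBelow xhat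
    linarith
  -- tightness at π0
  have key : ∀ r : Fin n → Bool,
      g xhat - ∑ j, π0 j * binVec xhat j ≤ g r - ∑ j, π0 j * binVec r j := by
    intro r
    by_cases hr : r = xhat
    · subst hr; exact le_refl _
    · have hdiff : (∑ j, π0 j * binVec xhat j) - ∑ j, π0 j * binVec r j
          = M * ((Finset.univ.filter (fun j => xhat j ≠ r j)).card : ℝ) := by
        rw [← Finset.sum_sub_distrib]
        rw [Finset.card_filter]
        push_cast
        rw [Finset.mul_sum]
        apply Finset.sum_congr rfl
        intro j _
        rcases Bool.eq_false_or_eq_true (xhat j) with h1 | h1 <;>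
          rcases Bool.eq_false_or_eq_true (r j) with h2 | h2 <;>
          simp [hπ0, binVec, h1, h2] <;> ring
      have hcard : 1 ≤ ((Finset.univ.filter (fun j => xhat j ≠ r j)).card : ℝ) := by
        have hne : (Finset.univ.filter (fun j => xhat j ≠ r j)).Nonempty := by
          by_contra h
          apply hr
          funext j
          rw [Finset.not_nonempty_iff_eq_empty, Finset.filter_eq_empty_iff] at h
          have := h (Finset.mem_univ j)
          simp at this
          exact this.symm
        exact_mod_cast Finset.card_pos.mpr hne
      have : M ≤ M * ((Finset.univ.filter (fun j => xhat j ≠ r j)).card : ℝ) :=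
        le_mul_of_one_le_right hM0 hcard
      have := hMge r
      linarith [this, hMge r, hdiff]
  have hLag : lagDual n g π0 = g xhat - ∑ j, π0 j * binVec xhat j := by
    apply le_antisymm
    · exact ciInf_le (Set.finite_range _).bddBelow xhat
    · exact le_ciInf key
  have hattain : (∑ j, π0 j * binVec xhat j) + lagDual n g π0 = g xhat := by
    rw [hLag]; ring
  constructor
  · apply le_antisymm
    · exact ciSup_le hub
    · calc g xhat = (∑ j, π0 j * binVec xhat j) + lagDual n g π0 := hattain.symm
        _ ≤ _ := le_ciSup ⟨g xhat, Set.forall_mem_range.mpr hub⟩ π0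
  · exact ⟨π0, hattain⟩
end

section
/- Let L ∈ ℝ satisfy L ≤ g(r) for all r ∈ V, and let x̂ ∈ V. Then for every x ∈ V, g(x) ≥ g(x̂) − (g(x̂) − L)·(⟨𝟙, x⟩ + ⟨𝟙, x̂⟩ − 2⟨x̂, x⟩). -/
/-- Validity of the integer optimality cut (Proposition 6 of the paper): if `L ≤ g(r)` for
all binary `r` and `x̂` is binary, then for every binary `x`,
`g(x) ≥ g(x̂) − (g(x̂) − L)·(⟨𝟙, x⟩ + ⟨𝟙, x̂⟩ − 2⟨x̂, x⟩)`. -/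
theorem stmt_9 (n : ℕ) (hn : 0 < n) (g : (Fin n → Bool) → ℝ) (L : ℝ)
    (hL : ∀ r : Fin n → Bool, L ≤ g r) (xhat x : Fin n → Bool) :
    g xhat - (g xhat - L) *
        ((∑ j, binVec x j) + (∑ j, binVec xhat j)
          - 2 * ∑ j, binVec xhat j * binVec x j) ≤ g x := by
  have hd : (∑ j, binVec x j) + (∑ j, binVec xhat j)
      - 2 * ∑ j, binVec xhat j * binVec x j
      = ∑ j, (binVec x j + binVec xhat j - 2 * (binVec xhat j * binVec x j)) := by
    rw [Finset.sum_sub_distrib, Finset.sum_add_distrib, ← Finset.mul_sum]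
  set d := (∑ j, binVec x j) + (∑ j, binVec xhat j)
      - 2 * ∑ j, binVec xhat j * binVec x j with hdef
  have hterm : ∀ j, (binVec x j + binVec xhat j - 2 * (binVec xhat j * binVec x j))
      = if x j = xhat j then 0 else 1 := by
    intro j
    simp only [binVec]
    cases hx : x j <;> cases hxh : xhat j <;> norm_num
  by_cases hxx : x = xhat
  · subst hxx
    have : d = 0 := by
      rw [hd]
      simp [hterm]
    rw [this]
    simp
  · have h1 : (1 : ℝ) ≤ d := by
      rw [hd]
      obtain ⟨j0, hj0⟩ : ∃ j, x j ≠ xhat j := Function.ne_iff.mp hxx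
      calc (1 : ℝ) = ∑ j, (if j = j0 then (1:ℝ) else 0) := by simp
        _ ≤ _ := by
            apply Finset.sum_le_sum
            intro i _
            rw [hterm]
            split_ifs with h h2 h3 <;> simp_all
    have hgL : 0 ≤ g xhat - L := sub_nonneg.mpr (hL xhat)
    have : g xhat - (g xhat - L) * d ≤ g xhat - (g xhat - L) * 1 := by
      have := mul_le_mul_of_nonneg_left h1 hgL
      linarith
    calc g xhat - (g xhat - L) * d ≤ L := by linarith
      _ ≤ g x := hL x
end

section
/- Let L ∈ ℝ satisfy L ≤ g(r) for all r ∈ V, and let x̂ ∈ V. Then the minimum over r ∈ V of g(r) + (g(x̂) − L)·Σ_{j=1}^n |x̂_j − r_j| equals g(x̂), and it is attained at r = x̂. -/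
lemma stmt_10_aux (n : ℕ) (g : (Fin n → Bool) → ℝ) (L : ℝ)
    (hL : ∀ r : Fin n → Bool, L ≤ g r) (xhat : Fin n → Bool) :
    (⨅ r : Fin n → Bool,
        (g r + (g xhat - L) * ∑ j, |binVec xhat j - binVec r j|)) = g xhat := by
  have hsum0 : (∑ j, |binVec xhat j - binVec xhat j|) = 0 := by simp
  apply le_antisymm
  · have := ciInf_le (f := fun r : Fin n → Bool =>
      g r + (g xhat - L) * ∑ j, |binVec xhat j - binVec r j|)
      (Finite.bddBelow_range _) xhat
    simpa [hsum0] using this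
  · apply le_ciInf
    intro r
    by_cases h : r = xhat
    · subst h; simp [hsum0]
    · have hj : ∃ j, r j ≠ xhat j := by
        by_contra hc
        push_neg at hc
        exact h (funext hc)
      obtain ⟨j, hj⟩ := hj
      have h1 : (1 : ℝ) ≤ ∑ j, |binVec xhat j - binVec r j| := by
        calc (1 : ℝ) = |binVec xhat j - binVec r j| := by
              unfold binVec
              cases hr : r j <;> cases hx : xhat j <;> simp_all
          _ ≤ ∑ j, |binVec xhat j - binVec r j| :=
              Finset.single_le_sum (f := fun i => |binVec xhat i - binVec r i|) (fun i _ => abs_nonneg _) (Finset.mem_univ j)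
      have hge : g xhat - L ≥ 0 := sub_nonneg.2 (hL xhat)
      have : g xhat - L ≤ (g xhat - L) * ∑ j, |binVec xhat j - binVec r j| := by
        nlinarith
      linarith [hL r]

/-- Key identity in the proof of Proposition 7 of the paper: if `L ≤ g(r)` for all binary
`r`, then `min_{r ∈ {0,1}^n} (g(r) + (g(x̂) − L)·Σ_j |x̂_j − r_j|) = g(x̂)`, and the minimum
is attained at `r = x̂`. -/
theorem stmt_10 (n : ℕ) (hn : 0 < n) (g : (Fin n → Bool) → ℝ) (L : ℝ)
    (hL : ∀ r : Fin n → Bool, L ≤ g r) (xhat : Fin n → Bool) :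
    (⨅ r : Fin n → Bool,
        (g r + (g xhat - L) * ∑ j, |binVec xhat j - binVec r j|)) = g xhat ∧
    (g xhat + (g xhat - L) * ∑ j, |binVec xhat j - binVec xhat j|) =
      ⨅ r : Fin n → Bool,
        (g r + (g xhat - L) * ∑ j, |binVec xhat j - binVec r j|) := by
  have h := stmt_10_aux n g L hL xhat
  refine ⟨h, ?_⟩
  rw [h]; simp
end

section
/- Let L ∈ ℝ satisfy L ≤ g(r) for all r ∈ V, let x̂ ∈ V, and set π := (g(x̂) − L)·(2x̂ − 𝟙) ∈ ℝ^n. Then ⟨π, x̂⟩ + 𝓛(π) = g(x̂); in particular π attains the supremum over π' ∈ ℝ^n of ⟨π', x̂⟩ + 𝓛(π'), and 𝓛(π) = g(x̂) − ⟨π, x̂⟩. -/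
/-!
With `c = g(x̂) − L ≥ 0` and `π = c (2x̂ − 𝟙)`, one has `⟨π, x̂⟩ − ⟨π, r⟩ = c · d_H(x̂, r)` for
every binary `r`. Since `c` bounds `g(x̂) − g(r)`, this makes `x̂` a minimiser of `g(r) − ⟨π, r⟩`,
so `𝓛(π) = g(x̂) − ⟨π, x̂⟩`; weak duality `⟨π', x̂⟩ + 𝓛(π') ≤ g(x̂)` gives optimality.
-/

open Finset

section LagrangianDual

variable {n : ℕ}

lemma lagDual_le (g : (Fin n → Bool) → ℝ) (π : Fin n → ℝ) (r : Fin n → Bool) :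
    lagDual n g π ≤ g r - ∑ j, π j * binVec r j :=
  ciInf_le (Set.finite_range _).bddBelow r

lemma sum_mul_binVec_add_lagDual_le (g : (Fin n → Bool) → ℝ) (π : Fin n → ℝ)
    (x : Fin n → Bool) : ∑ j, π j * binVec x j + lagDual n g π ≤ g x := by
  linarith [lagDual_le g π x]

lemma lagDual_eq_of_forall_le (g : (Fin n → Bool) → ℝ) (π : Fin n → ℝ) (x : Fin n → Bool)
    (hx : ∀ r, g x - ∑ j, π j * binVec x j ≤ g r - ∑ j, π j * binVec r j) :
    lagDual n g π = g x - ∑ j, π j * binVec x j :=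
  le_antisymm (lagDual_le g π x) (le_ciInf hx)

end LagrangianDual

section IntegerCut

variable {n : ℕ}

lemma binVec_mul_sub_eq_ite (x r : Fin n → Bool) (j : Fin n) :
    (2 * binVec x j - 1) * (binVec x j - binVec r j) = if x j ≠ r j then 1 else 0 := by
  unfold binVec
  cases x j <;> cases r j <;> norm_num

lemma sum_mul_binVec_sub_sum_mul_binVec (c : ℝ) (x r : Fin n → Bool) :
    ∑ j, c * (2 * binVec x j - 1) * binVec x j - ∑ j, c * (2 * binVec x j - 1) * binVec r j
      = c * hammingDist x r := by
  simp only [← sum_sub_distrib, mul_assoc, ← mul_sub, ← mul_sum, binVec_mul_sub_eq_ite,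
    sum_boole, hammingDist]

lemma sub_le_mul_hammingDist {g : (Fin n → Bool) → ℝ} {L : ℝ} (hL : ∀ r, L ≤ g r)
    (x r : Fin n → Bool) : g x - g r ≤ (g x - L) * hammingDist x r := by
  rcases eq_or_ne x r with rfl | hxr
  · simp
  · have hd : (1 : ℝ) ≤ hammingDist x r := by exact_mod_cast hammingDist_pos.mpr hxr
    nlinarith [hL r, hL x]

lemma sub_sum_integerCut_mul_binVec_le {g : (Fin n → Bool) → ℝ} {L : ℝ} (hL : ∀ r, L ≤ g r)
    (x r : Fin n → Bool) :
    g x - ∑ j, (g x - L) * (2 * binVec x j - 1) * binVec x j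
      ≤ g r - ∑ j, (g x - L) * (2 * binVec x j - 1) * binVec r j := by
  linarith [sum_mul_binVec_sub_sum_mul_binVec (g x - L) x r, sub_le_mul_hammingDist hL x r]

end IntegerCut

theorem stmt_11_general (n : ℕ) (g : (Fin n → Bool) → ℝ) (L : ℝ)
    (hL : ∀ r : Fin n → Bool, L ≤ g r) (xhat : Fin n → Bool)
    (π : Fin n → ℝ) (hπ : π = fun j => (g xhat - L) * (2 * binVec xhat j - 1)) :
    (∑ j, π j * binVec xhat j) + lagDual n g π = g xhat ∧
    (∀ π' : Fin n → ℝ,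
      (∑ j, π' j * binVec xhat j) + lagDual n g π' ≤
        (∑ j, π j * binVec xhat j) + lagDual n g π) ∧
    lagDual n g π = g xhat - ∑ j, π j * binVec xhat j := by
  have hlag : lagDual n g π = g xhat - ∑ j, π j * binVec xhat j :=
    lagDual_eq_of_forall_le g π xhat (by subst hπ; exact sub_sum_integerCut_mul_binVec_le hL xhat)
  refine ⟨by linarith, fun π' => ?_, hlag⟩
  linarith [sum_mul_binVec_add_lagDual_le g π' xhat]

/-- Proposition 7 of the paper: the integer optimality cut coefficient vector
`π = (g(x̂) − L)·(2x̂ − 𝟙)` is an optimal Lagrangian multiplier at the binary point `x̂`: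
`⟨π, x̂⟩ + 𝓛(π) = g(x̂)`, `π` attains `sup_{π'} (⟨π', x̂⟩ + 𝓛(π'))`, and
`𝓛(π) = g(x̂) − ⟨π, x̂⟩`. -/
theorem stmt_11 (n : ℕ) (hn : 0 < n) (g : (Fin n → Bool) → ℝ) (L : ℝ)
    (hL : ∀ r : Fin n → Bool, L ≤ g r) (xhat : Fin n → Bool)
    (π : Fin n → ℝ) (hπ : π = fun j => (g xhat - L) * (2 * binVec xhat j - 1)) :
    (∑ j, π j * binVec xhat j) + lagDual n g π = g xhat ∧
    (∀ π' : Fin n → ℝ,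
      (∑ j, π' j * binVec xhat j) + lagDual n g π' ≤
        (∑ j, π j * binVec xhat j) + lagDual n g π) ∧
    lagDual n g π = g xhat - ∑ j, π j * binVec xhat j :=
  stmt_11_general n g L hL xhat π hπ
end

section
/- Define 𝔅 := {b ∈ ℝ^d : 𝒫(b) ≠ ∅} and, for b ∈ 𝔅, define v(b) := sup over p ∈ 𝒫(b) of Σ_{a∈𝒜} p(a)·Q(a). Then there exists a constant H ≥ 0 such that |v(b) − v(b')| ≤ H·‖b − b'‖_∞ for all b, b' ∈ 𝔅. -/
/-!
Homogenise the hypograph `{(b, w) : ∃ p ∈ 𝒫(b), w ≤ ∑ p(a) Q(a)}` to a cone in `ℝ^d × ℝ × ℝ`. This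
cone is finitely generated, so by Weyl's theorem (Fourier–Motzkin elimination) it
is cut out by finitely many inequalities `0 ≤ f (b, w, 1)` with `f` linear. Each of them that
involves `w` bounds `w` by an affine function of `b`, and on `𝔅` the value `v(b)` is the least
of these bounds, so `v` is Lipschitz with the sum of their slopes as constant.
-/

open Finset PointedCone

theorem exists_nonneg_forall_mul_le {𝕜 κ : Type*} [Field 𝕜] [LinearOrder 𝕜]
    [IsStrictOrderedRing 𝕜] (N : Finset κ) (a c : κ → 𝕜)
    (hc : ∀ f ∈ N, 0 ≤ a f → 0 ≤ c f)
    (hac : ∀ j ∈ N, ∀ k ∈ N, 0 < a j → a k < 0 → a k * c j ≤ a j * c k) :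
    ∃ t : 𝕜, 0 ≤ t ∧ ∀ f ∈ N, t * a f ≤ c f := by
  -- the largest of `0` and the lower bounds `c k / a k` coming from `a k < 0`
  set L := insert 0 ((N.filter (a · < 0)).image fun k => c k / a k)
  have hL : L.Nonempty := insert_nonempty _ _
  refine ⟨L.max' hL, L.le_max' 0 (mem_insert_self _ _), fun f hf => ?_⟩
  rcases lt_trichotomy (a f) 0 with hneg | hzero | hpos
  · have : c f / a f ≤ L.max' hL :=
      L.le_max' _ (mem_insert_of_mem (mem_image_of_mem _ (mem_filter.2 ⟨hf, hneg⟩)))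
    rwa [div_le_iff_of_neg hneg] at this
  · rw [hzero, mul_zero]
    exact hc f hf hzero.ge
  · rw [← le_div_iff₀ hpos]
    refine L.max'_le hL _ fun l hl => ?_
    obtain rfl | hl := mem_insert.1 hl
    · exact div_nonneg (hc f hf hpos.le) hpos.le
    obtain ⟨k, hk, rfl⟩ := mem_image.1 hl
    obtain ⟨hkN, hk⟩ := mem_filter.1 hk
    rw [div_le_iff_of_neg hk, div_mul_eq_mul_div, div_le_iff₀ hpos]
    linarith [hac f hf k hkN hpos hk]

namespace PointedCone

variable {𝕜 E : Type*} [Field 𝕜] [LinearOrder 𝕜] [IsStrictOrderedRing 𝕜]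
  [AddCommGroup E] [Module 𝕜 E]

theorem DualFG.hull_insert {s : Set E} (hs : (hull 𝕜 s).DualFG LinearMap.id) (g : E) :
    (hull 𝕜 (insert g s)).DualFG LinearMap.id := by
  classical
  obtain ⟨N, hN⟩ := hs
  -- Fourier–Motzkin: eliminate the coefficient of `g` by combining every inequality that
  -- increases along `g` with every one that decreases along it
  refine ⟨N.filter (0 ≤ · g) ∪ (N.filter (0 < · g) ×ˢ N.filter (· g < 0)).image
    fun jk => jk.1 g • jk.2 - jk.2 g • jk.1, ?_⟩
  have hmem : ∀ z, z ∈ hull 𝕜 s ↔ ∀ f ∈ N, 0 ≤ f z := fun z => by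
    rw [← hN]; simp
  ext x
  simp only [hull, Submodule.mem_span_insert, mem_dual, coe_union, coe_filter, coe_image,
    coe_product, Set.mem_union, Set.mem_ofPred_eq, Set.mem_image, Set.mem_prod, Prod.exists]
  constructor
  · intro h
    obtain ⟨t, ht, hft⟩ := exists_nonneg_forall_mul_le N (fun f => f g) (fun f => f x)
      (fun f hf hfg => h (.inl ⟨hf, hfg⟩))
      (fun j hj k hk hjg hkg => by
        have := h (.inr ⟨j, k, ⟨⟨hj, hjg⟩, hk, hkg⟩, rfl⟩)
        simp only [LinearMap.id_apply, LinearMap.sub_apply, LinearMap.smul_apply,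
          smul_eq_mul] at this
        linarith)
    refine ⟨⟨t, ht⟩, x - t • g, (hmem _).2 fun f hf => ?_, by simp⟩
    simpa [sub_nonneg] using hft f hf
  · rintro ⟨t, z, hz, rfl⟩ f (⟨hf, hfg⟩ | ⟨j, k, ⟨⟨hj, hjg⟩, hk, hkg⟩, rfl⟩)
    · have := (hmem z).1 hz f hf
      simp only [LinearMap.id_apply, map_add, ← Nonneg.coe_smul, map_smul, smul_eq_mul]
      have := mul_nonneg t.2 hfg
      linarith
    · have hjz := (hmem z).1 hz j hj
      have hkz := (hmem z).1 hz k hk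
      simp only [LinearMap.id_apply, LinearMap.sub_apply, LinearMap.smul_apply, map_add,
        ← Nonneg.coe_smul, map_smul, smul_eq_mul]
      nlinarith

theorem DualFG.bot [FiniteDimensional 𝕜 E] : (⊥ : PointedCone 𝕜 E).DualFG LinearMap.id := by
  classical
  let b := Module.finBasis 𝕜 E
  refine ⟨univ.image b.coord ∪ univ.image (-b.coord ·), ?_⟩
  ext x
  simp only [mem_dual, coe_union, coe_image, coe_univ, Set.image_univ, Set.mem_union,
    Set.mem_range, LinearMap.id_apply, Submodule.mem_bot]
  constructor
  · intro h
    refine b.forall_coord_eq_zero_iff.1 fun i => le_antisymm ?_ (h (.inl ⟨i, rfl⟩))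
    simpa using h (.inr ⟨i, rfl⟩)
  · rintro rfl f -
    simp

/-- Weyl's theorem. -/
theorem FG.dualFG [FiniteDimensional 𝕜 E] {C : PointedCone 𝕜 E} (hC : C.FG) :
    C.DualFG LinearMap.id := by
  classical
  obtain ⟨s, rfl⟩ := hC
  induction s using Finset.induction_on with
  | empty => simpa using DualFG.bot
  | insert g s _ ih => simpa using ih.hull_insert g

end PointedCone

theorem LinearMap.apply_prod_mk {M : Type*} [AddCommGroup M] [Module ℝ M]
    (f : M × ℝ × ℝ →ₗ[ℝ] ℝ) (x : M) (w s : ℝ) :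
    f (x, w, s) = f (x, 0, 0) + w * f (0, 1, 0) + s * f (0, 0, 1) := by
  have : ((x, w, s) : M × ℝ × ℝ) = (x, 0, 0) + w • (0, 1, 0) + s • (0, 0, 1) := by
    ext <;> simp
  rw [this, map_add, map_add, map_smul, map_smul, smul_eq_mul, smul_eq_mul]

section MomentProblem

variable {ι : Type*} (𝒜 : Finset (ι → ℝ)) (Q : (ι → ℝ) → ℝ)

def ambiguitySet (b : ι → ℝ) : Set ((ι → ℝ) → ℝ) :=
  {p | (∀ a ∈ 𝒜, 0 ≤ p a) ∧ ∑ a ∈ 𝒜, p a = 1 ∧ ∀ i, ∑ a ∈ 𝒜, p a * a i ≤ b i}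

noncomputable def worstCaseValue (b : ι → ℝ) : ℝ :=
  sSup ((fun p => ∑ a ∈ 𝒜, p a * Q a) '' ambiguitySet 𝒜 b)

theorem bddAbove_expectation_image_ambiguitySet (b : ι → ℝ) :
    BddAbove ((fun p => ∑ a ∈ 𝒜, p a * Q a) '' ambiguitySet 𝒜 b) := by
  refine ⟨∑ a ∈ 𝒜, |Q a|, ?_⟩
  rintro _ ⟨p, ⟨hp0, hp1, -⟩, rfl⟩
  calc ∑ a ∈ 𝒜, p a * Q a ≤ ∑ a ∈ 𝒜, p a * ∑ a' ∈ 𝒜, |Q a'| :=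
        sum_le_sum fun a ha => mul_le_mul_of_nonneg_left ((le_abs_self _).trans
          (single_le_sum (f := fun a => |Q a|) (fun _ _ => abs_nonneg _) ha)) (hp0 a ha)
    _ = ∑ a ∈ 𝒜, |Q a| := by rw [← sum_mul, hp1, one_mul]

variable {𝒜 Q} in
theorem le_worstCaseValue {b : ι → ℝ} {p : (ι → ℝ) → ℝ} (hp : p ∈ ambiguitySet 𝒜 b) :
    ∑ a ∈ 𝒜, p a * Q a ≤ worstCaseValue 𝒜 Q b :=
  le_csSup (bddAbove_expectation_image_ambiguitySet 𝒜 Q b) (Set.mem_image_of_mem _ hp)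

variable [Fintype ι] [DecidableEq ι]

/-- Generators of the homogenised hypograph of `worstCaseValue 𝒜 Q`: the lifted support points
`(a, Q a, 1)`, the slack directions `(eᵢ, 0, 0)` and the downward direction `(0, -1, 0)`. -/
noncomputable def momentGenerators : Finset ((ι → ℝ) × ℝ × ℝ) :=
  𝒜.image (fun a => (a, Q a, 1)) ∪ univ.image (fun i => (Pi.single i 1, 0, 0)) ∪ {(0, -1, 0)}

variable {𝒜 Q} in
theorem exists_of_mem_hull_momentGenerators {x : (ι → ℝ) × ℝ × ℝ}
    (hx : x ∈ hull ℝ (momentGenerators 𝒜 Q : Set ((ι → ℝ) × ℝ × ℝ))) :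
    ∃ p : (ι → ℝ) → ℝ, (∀ a ∈ 𝒜, 0 ≤ p a) ∧ ∑ a ∈ 𝒜, p a = x.2.2 ∧
      (∀ i, ∑ a ∈ 𝒜, p a * a i ≤ x.1 i) ∧ x.2.1 ≤ ∑ a ∈ 𝒜, p a * Q a := by
  induction hx using Submodule.span_induction with
  | mem x hx =>
    simp only [momentGenerators, coe_union, coe_image, coe_univ, Set.image_univ, coe_singleton,
      Set.mem_union, Set.mem_image, mem_coe, Set.mem_range, Set.mem_singleton_iff] at hx
    obtain (⟨⟨a, ha, rfl⟩ | ⟨i, rfl⟩⟩ | rfl) := hx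
    · refine ⟨fun a' => if a' = a then 1 else 0, fun a' _ => by positivity, ?_⟩
      simp [ha]
    · refine ⟨0, fun _ _ => le_rfl, by simp, fun j => ?_, by simp⟩
      simp only [sum_const_zero, Pi.zero_apply, zero_mul, Pi.single_apply]
      split_ifs <;> norm_num
    · exact ⟨0, fun _ _ => le_rfl, by simp, fun j => by simp, by simp⟩
  | zero => exact ⟨0, fun _ _ => le_rfl, by simp, fun j => by simp, by simp⟩
  | add x y _ _ hx hy =>
    obtain ⟨p, hp0, hp1, hpb, hpw⟩ := hx
    obtain ⟨q, hq0, hq1, hqb, hqw⟩ := hy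
    refine ⟨p + q, fun a ha => add_nonneg (hp0 a ha) (hq0 a ha), ?_, fun i => ?_, ?_⟩
    · simp [sum_add_distrib, hp1, hq1]
    · simpa [add_mul, sum_add_distrib] using add_le_add (hpb i) (hqb i)
    · simpa [add_mul, sum_add_distrib] using add_le_add hpw hqw
  | smul c x _ hx =>
    obtain ⟨p, hp0, hp1, hpb, hpw⟩ := hx
    refine ⟨(c : ℝ) • p, fun a ha => mul_nonneg c.2 (hp0 a ha), ?_, fun i => ?_, ?_⟩
    · simp [← Nonneg.coe_smul, ← mul_sum, hp1]
    · simpa [← Nonneg.coe_smul, mul_assoc, ← mul_sum]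
        using mul_le_mul_of_nonneg_left (hpb i) c.2
    · simpa [← Nonneg.coe_smul, mul_assoc, ← mul_sum]
        using mul_le_mul_of_nonneg_left hpw c.2

variable {𝒜 Q} in
theorem mem_hull_momentGenerators_of_exists {x : (ι → ℝ) × ℝ × ℝ} {p : (ι → ℝ) → ℝ}
    (hp0 : ∀ a ∈ 𝒜, 0 ≤ p a) (hp1 : ∑ a ∈ 𝒜, p a = x.2.2)
    (hpb : ∀ i, ∑ a ∈ 𝒜, p a * a i ≤ x.1 i) (hpw : x.2.1 ≤ ∑ a ∈ 𝒜, p a * Q a) :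
    x ∈ hull ℝ (momentGenerators 𝒜 Q : Set ((ι → ℝ) × ℝ × ℝ)) := by
  have hx : x = ∑ a ∈ 𝒜, p a • (a, Q a, 1) +
      ∑ i, (x.1 i - ∑ a ∈ 𝒜, p a * a i) • (Pi.single i 1, 0, 0) +
      (∑ a ∈ 𝒜, p a * Q a - x.2.1) • (0, -1, 0) := by
    ext i <;> simp [Prod.fst_sum, Prod.snd_sum, Finset.sum_apply, Pi.single_apply, hp1]
  have hgen : ∀ y ∈ momentGenerators 𝒜 Q, y ∈ hull ℝ (momentGenerators 𝒜 Q : Set _) :=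
    fun y hy => subset_hull hy
  rw [hx]
  refine add_mem (add_mem (sum_mem fun a ha => smul_mem _ (hp0 a ha) (hgen _ ?_))
    (sum_mem fun i _ => smul_mem _ (sub_nonneg.2 (hpb i)) (hgen _ ?_)))
    (smul_mem _ (sub_nonneg.2 hpw) (hgen _ ?_))
  · exact mem_union_left _ (mem_union_left _ (mem_image_of_mem _ ha))
  · exact mem_union_left _ (mem_union_right _ (mem_image_of_mem _ (mem_univ i)))
  · exact mem_union_right _ (mem_singleton_self _)

theorem exists_polyhedral_hypograph :
    ∃ N : Finset (Module.Dual ℝ ((ι → ℝ) × ℝ × ℝ)), ∀ b w,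
      (∃ p ∈ ambiguitySet 𝒜 b, w ≤ ∑ a ∈ 𝒜, p a * Q a) ↔ ∀ f ∈ N, 0 ≤ f (b, w, 1) := by
  obtain ⟨N, hN⟩ :=
    FG.dualFG (C := hull ℝ (momentGenerators 𝒜 Q : Set ((ι → ℝ) × ℝ × ℝ))) ⟨_, rfl⟩
  refine ⟨N, fun b w => ?_⟩
  have : (b, w, 1) ∈ hull ℝ (momentGenerators 𝒜 Q : Set ((ι → ℝ) × ℝ × ℝ)) ↔
      ∃ p ∈ ambiguitySet 𝒜 b, w ≤ ∑ a ∈ 𝒜, p a * Q a :=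
    ⟨fun h => by simpa [ambiguitySet, and_assoc] using exists_of_mem_hull_momentGenerators h,
      fun ⟨p, ⟨hp0, hp1, hpb⟩, hpw⟩ => mem_hull_momentGenerators_of_exists hp0 hp1 hpb hpw⟩
  rw [← this, ← hN]
  simp

end MomentProblem

section Lipschitz

variable {ι : Type*} [Fintype ι]

/-- Each inequality `0 ≤ f (b, w, 1)` with `f (0, 1, 0) < 0` bounds `w` by an affine function of
`b`; this is the sum of their slopes. -/
noncomputable def hoffmanConstant (N : Finset (Module.Dual ℝ ((ι → ℝ) × ℝ × ℝ))) : ℝ :=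
  ∑ f ∈ N, ‖(f ∘ₗ LinearMap.inl ℝ _ _).toContinuousLinearMap‖ / |f (0, 1, 0)|

variable {𝒜 : Finset (ι → ℝ)} {Q : (ι → ℝ) → ℝ} {N : Finset (Module.Dual ℝ ((ι → ℝ) × ℝ × ℝ))}

theorem expectation_le_worstCaseValue_add
    (hN : ∀ b w, (∃ p ∈ ambiguitySet 𝒜 b, w ≤ ∑ a ∈ 𝒜, p a * Q a) ↔ ∀ f ∈ N, 0 ≤ f (b, w, 1))
    {b b' : ι → ℝ} {p : (ι → ℝ) → ℝ}
    (hp : p ∈ ambiguitySet 𝒜 b) (hb' : (ambiguitySet 𝒜 b').Nonempty) :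
    ∑ a ∈ 𝒜, p a * Q a ≤ worstCaseValue 𝒜 Q b' + hoffmanConstant N * ‖b - b'‖ := by
  refine le_of_forall_pos_le_add fun γ hγ => ?_
  set V := worstCaseValue 𝒜 Q b'
  obtain ⟨f, hfN, hf⟩ : ∃ f ∈ N, f (b', V + γ, 1) < 0 := by
    by_contra! h
    obtain ⟨q, hq, hle⟩ := (hN b' (V + γ)).2 h
    linarith [le_worstCaseValue (Q := Q) hq]
  obtain ⟨q, hq⟩ := hb'
  have hqf := (hN b' _).1 ⟨q, hq, le_rfl⟩ f hfN
  have hpf := (hN b _).1 ⟨p, hp, le_rfl⟩ f hfN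
  have hqV : ∑ a ∈ 𝒜, q a * Q a ≤ V := le_worstCaseValue hq
  rw [LinearMap.apply_prod_mk] at hf hqf hpf
  -- `f (b', ·, 1)` is nonnegative at `∑ q Q ≤ V` and negative at `V + γ`
  have hη : f (0, 1, 0) < 0 := by nlinarith
  set ℓ := (f ∘ₗ LinearMap.inl ℝ _ _).toContinuousLinearMap
  have hℓ : f (b, 0, 0) - f (b', 0, 0) ≤ ‖ℓ‖ * ‖b - b'‖ :=
    calc f (b, 0, 0) - f (b', 0, 0) = ℓ (b - b') := by simp [ℓ, ← map_sub]
      _ ≤ ‖ℓ (b - b')‖ := le_abs_self _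
      _ ≤ ‖ℓ‖ * ‖b - b'‖ := ℓ.le_opNorm _
  have hH : ‖ℓ‖ / |f (0, 1, 0)| ≤ hoffmanConstant N :=
    single_le_sum (f := fun f => ‖(f ∘ₗ LinearMap.inl ℝ _ _).toContinuousLinearMap‖ /
      |f (0, 1, 0)|) (fun _ _ => by positivity) hfN
  rw [abs_of_neg hη, div_le_iff₀ (neg_pos.2 hη)] at hH
  have : -f (0, 1, 0) * (∑ a ∈ 𝒜, p a * Q a - (V + γ)) <
      -f (0, 1, 0) * (hoffmanConstant N * ‖b - b'‖) := by
    nlinarith [norm_nonneg (b - b')]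
  linarith [lt_of_mul_lt_mul_left this (neg_pos.2 hη).le]

theorem worstCaseValue_le_add
    (hN : ∀ b w, (∃ p ∈ ambiguitySet 𝒜 b, w ≤ ∑ a ∈ 𝒜, p a * Q a) ↔ ∀ f ∈ N, 0 ≤ f (b, w, 1))
    {b b' : ι → ℝ} (hb : (ambiguitySet 𝒜 b).Nonempty) (hb' : (ambiguitySet 𝒜 b').Nonempty) :
    worstCaseValue 𝒜 Q b ≤ worstCaseValue 𝒜 Q b' + hoffmanConstant N * ‖b - b'‖ :=
  csSup_le (hb.image _) (Set.forall_mem_image.2 fun _ hp =>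
    expectation_le_worstCaseValue_add hN hp hb')

variable [DecidableEq ι]

theorem exists_lipschitzOnWith_worstCaseValue (𝒜 : Finset (ι → ℝ)) (Q : (ι → ℝ) → ℝ) :
    ∃ K : NNReal, LipschitzOnWith K (worstCaseValue 𝒜 Q) {b | (ambiguitySet 𝒜 b).Nonempty} := by
  obtain ⟨N, hN⟩ := exists_polyhedral_hypograph 𝒜 Q
  refine ⟨⟨hoffmanConstant N, sum_nonneg fun _ _ => by positivity⟩,
    LipschitzOnWith.of_le_add_mul _ fun b hb b' hb' => ?_⟩
  rw [dist_eq_norm]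
  exact worstCaseValue_le_add hN hb hb'

end Lipschitz

theorem stmt_14_general (d : ℕ) (𝒜 : Finset (Fin d → ℝ))
    (Q : (Fin d → ℝ) → ℝ)
    (v : (Fin d → ℝ) → ℝ)
    (hv : ∀ b : Fin d → ℝ,
      v b = sSup {w : ℝ | ∃ p : (Fin d → ℝ) → ℝ,
        ((∀ a ∈ 𝒜, 0 ≤ p a) ∧ (∑ a ∈ 𝒜, p a) = 1 ∧ ∀ i, (∑ a ∈ 𝒜, p a * a i) ≤ b i) ∧
        w = ∑ a ∈ 𝒜, p a * Q a}) :
    ∃ H : ℝ, 0 ≤ H ∧ ∀ b b' : Fin d → ℝ,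
      (∃ p : (Fin d → ℝ) → ℝ,
        (∀ a ∈ 𝒜, 0 ≤ p a) ∧ (∑ a ∈ 𝒜, p a) = 1 ∧ ∀ i, (∑ a ∈ 𝒜, p a * a i) ≤ b i) →
      (∃ p : (Fin d → ℝ) → ℝ,
        (∀ a ∈ 𝒜, 0 ≤ p a) ∧ (∑ a ∈ 𝒜, p a) = 1 ∧ ∀ i, (∑ a ∈ 𝒜, p a * a i) ≤ b' i) →
      |v b - v b'| ≤ H * ‖b - b'‖ := by
  have hv' : v = worstCaseValue 𝒜 Q := funext fun b => by
    rw [hv, worstCaseValue, Set.image]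
    simp only [ambiguitySet, Set.mem_ofPred_eq, eq_comm]
  obtain ⟨K, hK⟩ := exists_lipschitzOnWith_worstCaseValue 𝒜 Q
  refine ⟨K, K.coe_nonneg, fun b b' hb hb' => ?_⟩
  rw [hv', ← Real.dist_eq, ← dist_eq_norm]
  exact hK.dist_le_mul b hb b' hb'

/-- Hoffman-lemma step in the proof of Theorem 3 of the paper: the worst-case expectation
`v(b) = sup_{p ∈ 𝒫(b)} Σ_{a ∈ 𝒜} p(a)·Q(a)` is Lipschitz in the right-hand side `b` of the
moment constraint, uniformly over `𝔅 = {b : 𝒫(b) ≠ ∅}`, with respect to the sup norm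
(which is the default norm on `Fin d → ℝ`). -/
theorem stmt_14 (d : ℕ) (hd : 0 < d) (𝒜 : Finset (Fin d → ℝ)) (h𝒜 : 𝒜.Nonempty)
    (Q : (Fin d → ℝ) → ℝ)
    (v : (Fin d → ℝ) → ℝ)
    (hv : ∀ b : Fin d → ℝ,
      v b = sSup {w : ℝ | ∃ p : (Fin d → ℝ) → ℝ,
        ((∀ a ∈ 𝒜, 0 ≤ p a) ∧ (∑ a ∈ 𝒜, p a) = 1 ∧ ∀ i, (∑ a ∈ 𝒜, p a * a i) ≤ b i) ∧
        w = ∑ a ∈ 𝒜, p a * Q a}) :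
    ∃ H : ℝ, 0 ≤ H ∧ ∀ b b' : Fin d → ℝ,
      (∃ p : (Fin d → ℝ) → ℝ,
        (∀ a ∈ 𝒜, 0 ≤ p a) ∧ (∑ a ∈ 𝒜, p a) = 1 ∧ ∀ i, (∑ a ∈ 𝒜, p a * a i) ≤ b i) →
      (∃ p : (Fin d → ℝ) → ℝ,
        (∀ a ∈ 𝒜, 0 ≤ p a) ∧ (∑ a ∈ 𝒜, p a) = 1 ∧ ∀ i, (∑ a ∈ 𝒜, p a * a i) ≤ b' i) →
      |v b - v b'| ≤ H * ‖b - b'‖ :=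
  stmt_14_general d 𝒜 Q v hv
end
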